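/- arXiv:2410.07371 — 2 statements merged into one kernel-verified Lean document; each statement's English description precedes it below -/
import Mathlib

section
/- For a tuple λ = (λ_0,…,λ_{p−1}) ∈ B(F): λ ∈ γ_2(W(F)) if and only if λ_0 + λ_1 + ⋯ + λ_{p−1} = 0; and λ ∈ γ_3(W(F)) if and only if both λ_0 + λ_1 + ⋯ + λ_{p−1} = 0 and λ_0 + 2λ_1 + 3λ_2 + ⋯ + (p−1)λ_{p−2} = 0. -/
open Pointwise

namespace GGS
noncomputable section

variable (p : ℕ)

def shiftAut (G : Type*) [Group G] : Multiplicative (ZMod p) →* MulAut (ZMod p → G) :=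
  MonoidHom.mk'
    (fun k =>
      { toFun := fun g i => g (i + Multiplicative.toAdd k)
        invFun := fun g i => g (i - Multiplicative.toAdd k)
        left_inv := fun g => by funext i; simp
        right_inv := fun g => by funext i; simp
        map_mul' := fun g h => rfl })
    (fun k l => by
      apply MulEquiv.ext
      intro g
      funext i
      show g (i + Multiplicative.toAdd (k * l)) = g (i + Multiplicative.toAdd k + Multiplicative.toAdd l)
      rw [toAdd_mul, add_assoc])

abbrev W (G : Type*) [Group G] :=
  SemidirectProduct (ZMod p → G) (Multiplicative (ZMod p)) (shiftAut p G)

def inlW (G : Type*) [Group G] : (ZMod p → G) →* W p G := SemidirectProduct.inl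

def sigma (G : Type*) [Group G] : W p G := SemidirectProduct.inr (Multiplicative.ofAdd (1 : ZMod p))

def baseW (G : Type*) [Group G] : Subgroup (W p G) := (inlW p G).range

/-- Δ(g) = [g,σ] = g⁻¹ σ⁻¹ g σ, read off in the base group. -/
def Delta (G : Type*) [Group G] (g : ZMod p → G) : ZMod p → G :=
  ((inlW p G g)⁻¹ * (sigma p G)⁻¹ * inlW p G g * sigma p G).left

/-- γ₁* = B(G), γ_{i+1}* = [γ_i*, W(G)]; here `gammaStar n` is γ_{n+1}*. -/
def gammaStar (G : Type*) [Group G] : ℕ → Subgroup (W p G)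
  | 0 => baseW p G
  | (n + 1) => ⁅gammaStar G n, ⊤⁆

def lamG (G : Type*) [Group G] (g : G) (i : ℕ) : ZMod p → G :=
  (Delta p G)^[i - 1] (fun t => if t = 0 then g else 1)

def BSub (G : Type*) [Group G] (H : Subgroup G) : Subgroup (W p G) :=
  Subgroup.map (inlW p G) (Subgroup.pi Set.univ fun _ => H)

def inlF (F : Type*) [AddGroup F] (v : ZMod p → F) : W p (Multiplicative F) :=
  inlW p (Multiplicative F) (fun i => Multiplicative.ofAdd (v i))

def DeltaF (F : Type*) [AddGroup F] (v : ZMod p → F) : ZMod p → F :=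
  fun i => Multiplicative.toAdd (Delta p (Multiplicative F) (fun j => Multiplicative.ofAdd (v j)) i)

def lamF (F : Type*) [AddGroup F] [One F] (i : ℕ) : ZMod p → F :=
  (DeltaF p F)^[i - 1] (fun j => if j = 0 then 1 else 0)

end
end GGS

open GGS

/-!
For a base element `λ` and `y ∈ W` with rotation part `t`, `⁅λ, y⁆ = λ - λ(· + t)`.
The coordinate sum and the rotation part are homomorphisms to abelian groups, so `γ₂` lies
in their common kernel; conversely a zero-sum `λ` equals `μ - μ(· + 1) = ⁅μ, σ⁆` for `μ`
the (negated, cyclically read) partial sums of `λ`. For `γ₃` the extra invariant is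
`L(λ) = ∑ (i + 1) λ_i` with `i` read in `F`: since `L(μ - μ(· + t)) = t ∑ μ_i` in
characteristic `p`, `L` vanishes on `⁅γ₂, W⁆`, and conversely the `μ` above has zero sum, i.e.
lies in `γ₂`, exactly when `L(λ) = 0`.
-/

open scoped commutatorElement

namespace GGS

variable {p : ℕ}

section Shift

variable {G : Type*} [CommGroup G]

theorem shiftAut_apply (k : Multiplicative (ZMod p)) (g : ZMod p → G) (i : ZMod p) :
    shiftAut p G k g i = g (i + k.toAdd) := rfl

theorem conj_inl (y : W p G) (u : ZMod p → G) :
    y * SemidirectProduct.inl u * y⁻¹ = SemidirectProduct.inl (shiftAut p G y.right u) := by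
  ext i
  · simp [shiftAut_apply, mul_inv_cancel_comm]
  · simp

theorem commutatorElement_inl (u : ZMod p → G) (y : W p G) :
    ⁅(SemidirectProduct.inl u : W p G), y⁆
      = SemidirectProduct.inl (u / shiftAut p G y.right u) := by
  rw [commutatorElement_def, mul_assoc, mul_assoc, ← mul_assoc y, ← map_inv, conj_inl,
    ← map_mul, map_inv, div_eq_mul_inv]

end Shift

section Additive

variable (p) (F : Type*) [AddCommGroup F]

def inlHom : Multiplicative (ZMod p → F) →* W p (Multiplicative F) :=
  (inlW p (Multiplicative F)).comp (MulEquiv.funMultiplicative (ZMod p) F).toMonoidHom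

def baseSubgroup (S : AddSubgroup (ZMod p → F)) : Subgroup (W p (Multiplicative F)) :=
  S.toSubgroup.map (inlHom p F)

variable {p F}

theorem inlHom_injective : Function.Injective (inlHom p F) :=
  SemidirectProduct.inl_injective.comp (MulEquiv.funMultiplicative (ZMod p) F).injective

theorem inlF_mem_baseSubgroup {S : AddSubgroup (ZMod p → F)} {v : ZMod p → F} :
    inlF p F v ∈ baseSubgroup p F S ↔ v ∈ S :=
  Subgroup.mem_map_iff_mem inlHom_injective

theorem mem_baseSubgroup {S : AddSubgroup (ZMod p → F)} {x : W p (Multiplicative F)} :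
    x ∈ baseSubgroup p F S ↔ ∃ v ∈ S, inlF p F v = x :=
  ⟨fun ⟨a, ha, h⟩ => ⟨a.toAdd, ha, h⟩, fun ⟨v, hv, h⟩ => ⟨Multiplicative.ofAdd v, hv, h⟩⟩

theorem commutatorElement_inlF (v : ZMod p → F) (y : W p (Multiplicative F)) :
    ⁅inlF p F v, y⁆ = inlF p F (v - fun i => v (i + y.right.toAdd)) :=
  commutatorElement_inl _ y

theorem inlF_eq_commutatorElement_sigma {u v : ZMod p → F}
    (h : u - (fun i => u (i + 1)) = v) :
    inlF p F v = ⁅inlF p F u, sigma p (Multiplicative F)⁆ := by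
  rw [commutatorElement_inlF, ← h]
  rfl

end Additive

theorem sum_comp_add_right {α M : Type*} [AddGroup α] [Fintype α] [AddCommMonoid M]
    (f : α → M) (t : α) : ∑ i, f (i + t) = ∑ i, f i :=
  Equiv.sum_comp (Equiv.addRight t) f

section CoordSum

variable [NeZero p]

theorem sum_range_natCast {M : Type*} [AddCommMonoid M] (f : ZMod p → M) :
    ∑ r ∈ Finset.range p, f r = ∑ i, f i :=
  Finset.sum_nbij' (↑) ZMod.val (by simp) (by simp [ZMod.val_lt])
    (fun r hr => ZMod.val_cast_of_lt (Finset.mem_range.1 hr))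
    (fun i _ => ZMod.natCast_zmod_val i) (fun _ _ => rfl)

variable (p) (F : Type*) [AddCommGroup F]

def coordSum : (ZMod p → F) →+ F :=
  AddMonoidHom.mk' (fun v => ∑ i, v i) fun _ _ => Finset.sum_add_distrib

def coordSumW : W p (Multiplicative F) →* Multiplicative F :=
  MonoidHom.mk' (fun x => Multiplicative.ofAdd (∑ i, (x.left i).toAdd)) fun x y => by
    simp only [SemidirectProduct.mul_left, Pi.mul_apply, toAdd_mul, Finset.sum_add_distrib,
      shiftAut_apply, ofAdd_add]
    rw [sum_comp_add_right fun i => (y.left i).toAdd]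

variable {p F}

@[simp]
theorem coordSum_apply (v : ZMod p → F) : coordSum p F v = ∑ i, v i := rfl

theorem coordSum_sub_shift (u : ZMod p → F) (t : ZMod p) :
    coordSum p F (u - fun i => u (i + t)) = 0 := by
  rw [map_sub, coordSum_apply, coordSum_apply, sum_comp_add_right, sub_self]

theorem baseSubgroup_ker_coordSum :
    baseSubgroup p F (coordSum p F).ker
      = (coordSumW p F).ker ⊓ SemidirectProduct.rightHom.ker := by
  ext x
  simp only [baseSubgroup, Subgroup.mem_map, Subgroup.mem_inf, MonoidHom.mem_ker]
  constructor
  · rintro ⟨a, ha, rfl⟩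
    exact ⟨congrArg Multiplicative.ofAdd ha, rfl⟩
  · rintro ⟨hsum, hright⟩
    exact ⟨Multiplicative.ofAdd fun i => (x.left i).toAdd, congrArg Multiplicative.toAdd hsum,
      SemidirectProduct.ext rfl hright.symm⟩

theorem exists_sub_shift_eq {v : ZMod p → F} (hv : ∑ i, v i = 0) :
    ∃ u : ZMod p → F, (u - fun i => u (i + 1)) = v := by
  set U : ℕ → F := fun n => ∑ j ∈ Finset.range n, v j
  have hU : Function.Periodic U p := fun n => by
    simp only [U, Finset.sum_range_add, Nat.cast_add, add_eq_left, add_comm (n : ZMod p)]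
    rw [sum_range_natCast fun i => v (i + (n : ZMod p)), sum_comp_add_right, hv]
  refine ⟨fun i => -U i.val, funext fun i => ?_⟩
  obtain ⟨n, rfl⟩ : ∃ n : ℕ, (n : ZMod p) = i := ⟨i.val, ZMod.natCast_zmod_val i⟩
  have hcast : ((n : ZMod p) + 1) = ((n + 1 : ℕ) : ZMod p) := by push_cast; rfl
  simp only [Pi.sub_apply, hcast, ZMod.val_natCast, hU.map_mod_nat, U, Finset.sum_range_succ]
  abel

theorem lowerCentralSeries_one_eq :
    (⊤ : Subgroup (W p (Multiplicative F))).lowerCentralSeries 1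
      = baseSubgroup p F (coordSum p F).ker := by
  refine le_antisymm ?_ fun x hx => ?_
  · rw [Subgroup.top_lowerCentralSeries_one, baseSubgroup_ker_coordSum]
    exact le_inf (Abelianization.commutator_subset_ker _) (Abelianization.commutator_subset_ker _)
  · obtain ⟨v, hv, rfl⟩ := mem_baseSubgroup.1 hx
    obtain ⟨u, hu⟩ := exists_sub_shift_eq hv
    rw [inlF_eq_commutatorElement_sigma hu]
    exact Subgroup.commutator_mem_commutator (Subgroup.mem_top _) (Subgroup.mem_top _)

end CoordSum

section WeightedSum

variable [NeZero p] (p) (F : Type*) [CommRing F]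

def weightedSum : (ZMod p → F) →+ F :=
  AddMonoidHom.mk' (fun v => ∑ i : ZMod p, ((ZMod.cast i : F) + 1) * v i) fun _ _ => by
    simp only [Pi.add_apply, mul_add, Finset.sum_add_distrib]

variable {p F}

@[simp]
theorem weightedSum_apply (v : ZMod p → F) :
    weightedSum p F v = ∑ i : ZMod p, ((ZMod.cast i : F) + 1) * v i := rfl

variable [CharP F p]

theorem weightedSum_sub_shift (u : ZMod p → F) (t : ZMod p) :
    weightedSum p F (u - fun i => u (i + t)) = (ZMod.cast t : F) * ∑ i, u i := by
  calc weightedSum p F (u - fun i => u (i + t))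
      = ∑ i : ZMod p, ((ZMod.cast i : F) + 1) * u i
          - ∑ i : ZMod p, ((ZMod.cast (i - t) : F) + 1) * u i := by
        rw [← sum_comp_add_right (fun i => ((ZMod.cast (i - t) : F) + 1) * u i) t]
        simp [mul_sub, Finset.sum_sub_distrib]
    _ = ∑ i, (ZMod.cast t : F) * u i := by
        rw [← Finset.sum_sub_distrib]
        simp only [ZMod.cast_sub', ← sub_mul]
        ring_nf
    _ = (ZMod.cast t : F) * ∑ i, u i := (Finset.mul_sum ..).symm

theorem weightedSum_eq_sum_range (v : ZMod p → F) :
    weightedSum p F v = ∑ r ∈ Finset.range (p - 1), ((r : F) + 1) * v r := by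
  obtain ⟨n, rfl⟩ := Nat.exists_eq_succ_of_ne_zero (NeZero.ne p)
  rw [weightedSum_apply, ← sum_range_natCast, Finset.sum_range_succ, ZMod.cast_natCast',
    ← Nat.cast_succ, CharP.cast_eq_zero, zero_mul, add_zero, Nat.succ_sub_one]
  simp only [ZMod.cast_natCast']

theorem lowerCentralSeries_two_eq :
    (⊤ : Subgroup (W p (Multiplicative F))).lowerCentralSeries 2
      = baseSubgroup p F ((coordSum p F).ker ⊓ (weightedSum p F).ker) := by
  rw [Subgroup.lowerCentralSeries_succ, lowerCentralSeries_one_eq]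
  refine le_antisymm (Subgroup.commutator_le.2 fun g hg y _ => ?_) fun x hx => ?_
  · obtain ⟨v, hv, rfl⟩ := mem_baseSubgroup.1 hg
    rw [commutatorElement_inlF, inlF_mem_baseSubgroup]
    refine ⟨coordSum_sub_shift _ _, AddMonoidHom.mem_ker.2 ?_⟩
    rw [weightedSum_sub_shift, ← coordSum_apply, hv, mul_zero]
  · obtain ⟨v, hv, rfl⟩ := mem_baseSubgroup.1 hx
    rw [AddSubgroup.mem_inf, AddMonoidHom.mem_ker, AddMonoidHom.mem_ker] at hv
    obtain ⟨hsum, hweight⟩ := hv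
    obtain ⟨u, hu⟩ := exists_sub_shift_eq hsum
    rw [← hu, weightedSum_sub_shift, ZMod.cast_one', one_mul] at hweight
    rw [inlF_eq_commutatorElement_sigma hu]
    exact Subgroup.commutator_mem_commutator (inlF_mem_baseSubgroup.2 hweight)
      (Subgroup.mem_top _)

end WeightedSum

end GGS

theorem statement6_general (p : ℕ) [Fact p.Prime]
    (F : Type*) [Field F] [CharP F p] (v : ZMod p → F) :
    (inlF p F v ∈ Subgroup.lowerCentralSeries (⊤ : Subgroup (W p (Multiplicative F))) 1 ↔
      ∑ j : ZMod p, v j = 0)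
    ∧ (inlF p F v ∈ Subgroup.lowerCentralSeries (⊤ : Subgroup (W p (Multiplicative F))) 2 ↔
      (∑ j : ZMod p, v j = 0 ∧
        ∑ r ∈ Finset.range (p - 1), ((r : F) + 1) * v (r : ZMod p) = 0)) := by
  rw [lowerCentralSeries_one_eq, lowerCentralSeries_two_eq, inlF_mem_baseSubgroup,
    inlF_mem_baseSubgroup, AddSubgroup.mem_inf, AddMonoidHom.mem_ker, AddMonoidHom.mem_ker,
    coordSum_apply, weightedSum_eq_sum_range]
  exact ⟨Iff.rfl, Iff.rfl⟩

/-- λ ∈ γ_2(W(F)) iff λ₀+⋯+λ_{p−1} = 0, and λ ∈ γ_3(W(F)) iff additionally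
    λ₀ + 2λ₁ + ⋯ + (p−1)λ_{p−2} = 0.
    (γ_i(W(F)) = `lowerCentralSeries (W p (Multiplicative F)) (i-1)`.) -/
theorem statement6 (p : ℕ) [Fact p.Prime] (hp : Odd p)
    (F : Type*) [Field F] [Fintype F] [CharP F p] (v : ZMod p → F) :
    (inlF p F v ∈ Subgroup.lowerCentralSeries (⊤ : Subgroup (W p (Multiplicative F))) 1 ↔
      ∑ j : ZMod p, v j = 0)
    ∧ (inlF p F v ∈ Subgroup.lowerCentralSeries (⊤ : Subgroup (W p (Multiplicative F))) 2 ↔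
      (∑ j : ZMod p, v j = 0 ∧
        ∑ r ∈ Finset.range (p - 1), ((r : F) + 1) * v (r : ZMod p) = 0)) :=
  statement6_general p F v
end

section
/- Let G be a finite p-group of nilpotency class c whose abelianisation G/G' is elementary abelian, and let i ≥ 1. Writing i = (j−1)p + k with j ≥ 1 and 1 ≤ k ≤ p, one has γ_i*(W(G)) = Δ^{k−1}(B(γ_j(G)))·B(γ_{j+1}(G)). In particular, γ_{jp+1}*(W(G)) = B(γ_{j+1}(G)) for every j ≥ 0, and the nilpotency class of W(G) is exactly cp. -/
/-!
Write `Δ(u) = [u, σ]` on the base group `B = G^p`, `B(H) = H^p`, and `x e_i` for the vector with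
`x` at `i` and `1` elsewhere. Commutators of `B(γ_j)` with base elements land in `B(γ_{j+1})` and
commutators with `σ` are conjugates of `Δ`, so commutation with `W` turns
`Δ^m(B(γ_j))·B(γ_{j+1})` into `Δ^{m+1}(B(γ_j))·B(γ_{j+1})`; the factor `B(γ_{j+1})` is reached
because `[Δ^m(x e_{i-m}), y e_i] = [x, y] e_i` for `m < p`. After `p` steps the layer closes:
`p`-th powers of `γ_j` lie in `γ_{j+1}` (by induction from `G/G'` having exponent `p`), so on
`(γ_j/γ_{j+1})^p` the map `Δ` is `τ - 1` for the cyclic shift `τ`, and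
`(τ - 1)^p = τ^p + (-1)^p = 0` modulo `p` for odd `p`. As `W/B` is cyclic, `[W, W] = [B, W]`, so
`γ_i(W) = γ_i*(W)` for `i ≥ 2`; finally `Δ^{p-1}(x e_0) ≠ 1` for `1 ≠ x ∈ γ_c(G)`.
-/

open Pointwise

namespace GGS

open Subgroup
open scoped commutatorElement

local notation "γ" => Subgroup.lowerCentralSeries (⊤ : Subgroup _)

section GroupTheory

variable {G : Type*} [Group G]

theorem commute_mk_of_commutatorElement_mem {K : Subgroup G} [K.Normal] {x y : G}
    (h : ⁅x, y⁆ ∈ K) : Commute (QuotientGroup.mk' K x) (QuotientGroup.mk' K y) := by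
  rw [← commutatorElement_eq_one_iff_commute, ← map_commutatorElement]
  exact (QuotientGroup.eq_one_iff _).mpr h

theorem commutator_closure_le {S T : Set G} {K : Subgroup G} [K.Normal]
    (h : ∀ s ∈ S, ∀ t ∈ T, ⁅s, t⁆ ∈ K) : ⁅closure S, closure T⁆ ≤ K := by
  rw [← QuotientGroup.ker_mk' K, ← Subgroup.map_eq_bot_iff, map_commutator, MonoidHom.map_closure,
    MonoidHom.map_closure, commutator_eq_bot_iff_le_centralizer, centralizer_closure, closure_le]
  rintro _ ⟨s, hs, rfl⟩
  rw [SetLike.mem_coe, mem_centralizer_iff]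
  rintro _ ⟨t, ht, rfl⟩
  exact (commute_mk_of_commutatorElement_mem (h s hs t ht)).eq.symm

theorem conj_mem_closure {S : Set G} {g : G} (hS : ∀ x ∈ S, g * x * g⁻¹ ∈ closure S)
    {x : G} (hx : x ∈ closure S) : g * x * g⁻¹ ∈ closure S :=
  (closure_le ((closure S).comap (MulAut.conj g).toMonoidHom)).mpr hS hx

theorem commutatorElement_pow_left {a b : G} (h : ∀ j : ℕ, Commute a ⁅a ^ j, b⁆) :
    ∀ k : ℕ, ⁅a ^ k, b⁆ = ⁅a, b⁆ ^ k
  | 0 => by simp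
  | k + 1 => by
    rw [pow_succ', commutatorElement_mul_left_eq_conj_mul, (h k).eq, mul_inv_cancel_right,
      commutatorElement_pow_left h k, pow_succ]

theorem commute_mk_of_mem_lowerCentralSeries {n : ℕ} {x : G} (hx : x ∈ γ n) (y : G) :
    Commute (QuotientGroup.mk' (γ (n + 1)) x) (QuotientGroup.mk' (γ (n + 1)) y) :=
  commute_mk_of_commutatorElement_mem (commutator_mem_commutator hx (mem_top y))

theorem pow_mem_lowerCentralSeries_succ {p : ℕ} (hab : ∀ g : G, g ^ p ∈ commutator G) :
    ∀ n, ∀ x ∈ (γ n : Subgroup G), x ^ p ∈ (γ (n + 1) : Subgroup G)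
  | 0, x, _ => hab x
  | n + 1, x, hx => by
    let π := QuotientGroup.mk' (γ (n + 1 + 1) : Subgroup G)
    have hγ : (γ (n + 1) : Subgroup G) =
        closure {g | ∃ a ∈ γ n, ∃ b ∈ (⊤ : Subgroup G), ⁅a, b⁆ = g} :=
      commutator_def _ _
    suffices key : ∀ z ∈ (γ (n + 1) : Subgroup G), π z ^ p = 1 from
      (QuotientGroup.eq_one_iff _).mp ((map_pow π x p).trans (key x hx))
    intro z hz
    rw [hγ] at hz
    induction hz using closure_induction with
    | mem _ hg =>
      obtain ⟨a, ha, b, -, rfl⟩ := hg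
      -- `π ⁅a, b⁆ ^ p = π ⁅a ^ p, b⁆`, as the `⁅a ^ j, b⁆` are central modulo `γ (n + 2)`
      have hcomm : ∀ j : ℕ, Commute (π a) ⁅π a ^ j, π b⁆ := fun j => by
        rw [← map_pow, ← map_commutatorElement]
        exact (commute_mk_of_mem_lowerCentralSeries
          (commutator_mem_commutator (pow_mem ha j) (mem_top b)) a).symm
      rw [map_commutatorElement, ← commutatorElement_pow_left hcomm, ← map_pow,
        ← map_commutatorElement]
      exact (QuotientGroup.eq_one_iff _).mpr (commutator_mem_commutator
        (pow_mem_lowerCentralSeries_succ hab n a ha) (mem_top b))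
    | one => rw [map_one, one_pow]
    | mul y z hy _ hy' hz' =>
      rw [← hγ] at hy
      rw [map_mul, (commute_mk_of_mem_lowerCentralSeries hy z).mul_pow, hy', hz', one_mul]
    | inv y _ hy => rw [map_inv, inv_pow, hy, inv_one]

end GroupTheory

section Delta

variable {p : ℕ} {G : Type*} [Group G]

theorem Delta_apply (g : ZMod p → G) (i : ZMod p) : Delta p G g i = (g i)⁻¹ * g (i - 1) := by
  simp only [Delta, inlW, sigma, SemidirectProduct.mul_left, SemidirectProduct.inv_left,
    SemidirectProduct.left_inl, SemidirectProduct.right_inl, SemidirectProduct.mul_right,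
    SemidirectProduct.inv_right, SemidirectProduct.left_inr, SemidirectProduct.right_inr]
  simp [shiftAut, sub_eq_add_neg]

theorem map_comp_Delta {H : Type*} [Group H] (f : G →* H) (g : ZMod p → G) :
    f ∘ Delta p G g = Delta p H (f ∘ g) := by
  funext i
  simp [Delta_apply]

theorem map_comp_Delta_iterate {H : Type*} [Group H] (f : G →* H) (m : ℕ) (g : ZMod p → G) :
    f ∘ (Delta p G)^[m] g = (Delta p H)^[m] (f ∘ g) :=
  Function.Semiconj.iterate_right (f := (f ∘ ·)) (map_comp_Delta f) m g

theorem Delta_iterate_mem {H : Subgroup G} {g : ZMod p → G} (hg : ∀ t, g t ∈ H) (m : ℕ)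
    (t : ZMod p) : (Delta p G)^[m] g t ∈ H := by
  induction m generalizing t with
  | zero => exact hg t
  | succ m ih =>
    rw [Function.iterate_succ_apply', Delta_apply]
    exact mul_mem (inv_mem (ih t)) (ih _)

theorem Delta_iterate_comp_add_one (m : ℕ) (g : ZMod p → G) :
    (Delta p G)^[m] (fun i => g (i + 1)) = fun i => (Delta p G)^[m] g (i + 1) := by
  induction m with
  | zero => rfl
  | succ m ih =>
    funext i
    simp only [Function.iterate_succ_apply', ih, Delta_apply, sub_add_eq_add_sub]

theorem Delta_iterate_apply_eq_one {g : ZMod p → G} (m : ℕ) {s : ZMod p}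
    (h : ∀ j ≤ m, g (s - j) = 1) : (Delta p G)^[m] g s = 1 := by
  induction m generalizing s with
  | zero => simpa using h 0 le_rfl
  | succ m ih =>
    rw [Function.iterate_succ_apply', Delta_apply, ih fun j hj => h j (by omega),
      ih fun j hj => by simpa [sub_sub, add_comm] using h (j + 1) (by omega), inv_one, one_mul]

theorem Delta_iterate_apply_eq {g : ZMod p → G} (m : ℕ) {s : ZMod p}
    (h : ∀ j < m, g (s - j) = 1) : (Delta p G)^[m] g s = g (s - m) := by
  induction m generalizing s with
  | zero => simp
  | succ m ih =>
    rw [Function.iterate_succ_apply', Delta_apply,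
      Delta_iterate_apply_eq_one m fun j hj => h j (by omega),
      ih fun j hj => by simpa [sub_sub, add_comm] using h (j + 1) (by omega), inv_one, one_mul]
    push_cast
    ring_nf

theorem Delta_iterate_mulSingle_apply {m : ℕ} (hm : m < p) (t : ZMod p) (x : G) :
    (Delta p G)^[m] (Pi.mulSingle t x) (t + m) = x := by
  have h : ∀ j < m, (Pi.mulSingle t x : ZMod p → G) (t + m - j) = 1 := fun j hj => by
    refine Pi.mulSingle_eq_of_ne (M := fun _ => G) ?_ x
    rw [add_sub_assoc, ne_eq, add_eq_left, sub_eq_zero, ZMod.natCast_eq_natCast_iff',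
      Nat.mod_eq_of_lt hm, Nat.mod_eq_of_lt (hj.trans hm)]
    exact hj.ne'
  rw [Delta_iterate_apply_eq m h, add_sub_cancel_right, Pi.mulSingle_eq_same]

theorem Delta_iterate_prime_eq_one [Fact p.Prime] (hp : Odd p) {A : Type*} [CommGroup A]
    (hA : ∀ a : A, a ^ p = 1) (w : ZMod p → A) : (Delta p A)^[p] w = 1 := by
  let τ : AddMonoid.End (ZMod p → Additive A) :=
    AddMonoidHom.mk' (fun x i => x (i - 1)) fun _ _ => rfl
  have hτ1 : ∀ x i, τ x i = x (i - 1) := fun _ _ => rfl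
  have hτ : ∀ k : ℕ, ∀ x, (τ ^ k) x = fun i => x (i - k) := by
    intro k x
    induction k with
    | zero => simp
    | succ k ih =>
      funext i
      rw [AddMonoid.End.coe_pow, Function.iterate_succ_apply', ← AddMonoid.End.coe_pow, ih, hτ1]
      push_cast
      rw [sub_sub, add_comm]
  have hτp : τ ^ p = 1 := by
    ext x i
    simp [hτ]
  have hδ : Function.Semiconj (fun w : ZMod p → A => fun i => Additive.ofMul (w i))
      (Delta p A) ⇑(τ - 1) := by
    intro w
    funext i
    change _ = τ (fun j => Additive.ofMul (w j)) i - Additive.ofMul (w i)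
    simp [hτ1, Delta_apply, neg_add_eq_sub]
  have hδp : (τ - 1) ^ p = 0 := by
    rw [sub_eq_add_neg, (Commute.neg_one_right τ).add_pow_prime_eq' Fact.out, hτp,
      hp.neg_one_pow, add_neg_cancel, zero_add]
    ext x i
    simp only [AddMonoid.End.coe_mul, Function.comp_apply, AddMonoid.End.natCast_apply,
      Pi.smul_apply, toMul_nsmul, hA]
    rfl
  funext i
  have := congrFun (hδ.iterate_right p w) i
  rw [← AddMonoid.End.coe_pow, hδp] at this
  exact Additive.ofMul.injective this

theorem Delta_iterate_prime_mem_lowerCentralSeries_succ [Fact p.Prime] (hp : Odd p)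
    (hab : ∀ g : G, g ^ p ∈ commutator G) {n : ℕ} {v : ZMod p → G} (hv : ∀ t, v t ∈ γ n)
    (t : ZMod p) : (Delta p G)^[p] v t ∈ (γ (n + 1) : Subgroup G) := by
  let π := QuotientGroup.mk' (γ (n + 1) : Subgroup G)
  let A := (γ n : Subgroup G).map π
  let _ : CommGroup A :=
    { (inferInstance : Group A) with
      mul_comm := by
        rintro ⟨_, x, hx, rfl⟩ ⟨_, y, -, rfl⟩
        exact Subtype.ext (commute_mk_of_mem_lowerCentralSeries hx y).eq }
  have hA : ∀ a : A, a ^ p = 1 := by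
    rintro ⟨_, x, hx, rfl⟩
    refine Subtype.ext ?_
    rw [SubgroupClass.coe_pow, ← map_pow]
    exact (QuotientGroup.eq_one_iff _).mpr (pow_mem_lowerCentralSeries_succ hab n x hx)
  let w : ZMod p → A := fun i => ⟨π (v i), mem_map_of_mem π (hv i)⟩
  have hπ := congrFun (map_comp_Delta_iterate π p v) t
  have hw := congrFun (map_comp_Delta_iterate A.subtype p w) t
  rw [Delta_iterate_prime_eq_one hp hA] at hw
  refine (QuotientGroup.eq_one_iff _).mp ?_
  exact hπ.trans hw.symm

end Delta

section Wreath

variable {p : ℕ} {G : Type*} [Group G]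

theorem inlW_Delta (g : ZMod p → G) :
    inlW p G (Delta p G g) = ⁅(inlW p G g)⁻¹, (sigma p G)⁻¹⁆ := by
  rw [commutatorElement_def, inv_inv, inv_inv]
  ext
  · rfl
  · simp [sigma, inlW]

theorem commutatorElement_inlW_sigma (g : ZMod p → G) :
    ⁅inlW p G g, sigma p G⁆
      = (inlW p G g * sigma p G) * inlW p G (Delta p G g) * (inlW p G g * sigma p G)⁻¹ := by
  rw [inlW_Delta, commutatorElement_def, commutatorElement_def]
  group

theorem sigma_mul_inlW_mul_inv (g : ZMod p → G) :
    sigma p G * inlW p G g * (sigma p G)⁻¹ = inlW p G (fun i => g (i + 1)) := by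
  rw [sigma, inlW, ← map_inv, ← SemidirectProduct.inl_aut]
  rfl

theorem exists_eq_inlW_mul_sigma_pow [NeZero p] (w : W p G) :
    ∃ (b : ZMod p → G) (k : ℕ), w = inlW p G b * sigma p G ^ k := by
  refine ⟨w.left, (Multiplicative.toAdd w.right).val, ?_⟩
  rw [sigma, ← map_pow, ← ofAdd_nsmul, nsmul_one, ZMod.natCast_zmod_val, ofAdd_toAdd]
  exact (SemidirectProduct.inl_left_mul_inr_right w).symm

theorem closure_insert_sigma_range_inlW [NeZero p] :
    closure (insert (sigma p G) (Set.range (inlW p G))) = ⊤ := by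
  refine eq_top_iff.mpr fun w _ => ?_
  obtain ⟨b, k, rfl⟩ := exists_eq_inlW_mul_sigma_pow w
  exact mul_mem (subset_closure (Or.inr ⟨b, rfl⟩))
    (pow_mem (subset_closure (Set.mem_insert _ _)) k)

theorem normal_of_conj_sigma_of_conj_inlW [NeZero p] {H : Subgroup (W p G)}
    (hσ : ∀ h ∈ H, sigma p G * h * (sigma p G)⁻¹ ∈ H)
    (hinl : ∀ b, ∀ h ∈ H, inlW p G b * h * (inlW p G b)⁻¹ ∈ H) : H.Normal := by
  have hσk : ∀ k : ℕ, ∀ h ∈ H, sigma p G ^ k * h * (sigma p G ^ k)⁻¹ ∈ H := by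
    intro k
    induction k with
    | zero => simp
    | succ k ih =>
      intro h hh
      simpa [pow_succ', mul_assoc] using hσ _ (ih h hh)
  refine ⟨fun h hh w => ?_⟩
  obtain ⟨b, k, rfl⟩ := exists_eq_inlW_mul_sigma_pow w
  simpa [mul_assoc] using hinl b _ (hσk k h hh)

theorem BSub_le_of_forall_mulSingle_mem [NeZero p] {H : Subgroup G} {K : Subgroup (W p G)}
    (h : ∀ i, ∀ x ∈ H, inlW p G (Pi.mulSingle i x) ∈ K) : BSub p G H ≤ K := by
  rw [BSub, map_le_iff_le_comap, pi_le_iff]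
  rintro i _ ⟨x, hx, rfl⟩
  exact h i x hx

theorem closure_image_inlW (H : Subgroup G) :
    closure (inlW p G '' {v | ∀ t, v t ∈ H}) = BSub p G H := by
  have hv : {v : ZMod p → G | ∀ t, v t ∈ H} =
      (Subgroup.pi Set.univ fun _ => H : Subgroup (ZMod p → G)) := by
    ext v
    simp [mem_pi]
  rw [hv, ← coe_map, closure_eq, BSub]

instance baseW_normal : (baseW p G).Normal := by
  rw [baseW, inlW, SemidirectProduct.range_inl_eq_ker_rightHom]
  infer_instance

theorem BSub_top : BSub p G ⊤ = baseW p G := by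
  rw [BSub, pi_top, ← MonoidHom.range_eq_map, baseW]

theorem mulSingle_apply_mem {H : Subgroup G} {x : G} (hx : x ∈ H) (t s : ZMod p) :
    (Pi.mulSingle t x : ZMod p → G) s ∈ H := by
  rw [Pi.mulSingle_apply]
  split_ifs with hs
  · exact hx
  · exact one_mem H

end Wreath

section Layers

variable {p : ℕ} {G : Type*} [Group G]

variable (p G) in
def gammaGen (n m : ℕ) : Set (ZMod p → G) :=
  (Delta p G)^[m] '' {v | ∀ t, v t ∈ γ n} ∪ {v | ∀ t, v t ∈ γ (n + 1)}

variable (p G) in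
/-- `Δ^m(B(γ_{n+1}(G))) · B(γ_{n+2}(G))`, the paper's description of `γ*_{np+m+1}(W(G))`. -/
def gammaLayer (n m : ℕ) : Subgroup (W p G) :=
  closure (inlW p G '' gammaGen p G n m)

theorem gammaLayer_eq (n m : ℕ) :
    gammaLayer p G n m = closure (inlW p G '' ((Delta p G)^[m] '' {v | ∀ t, v t ∈ γ n}))
      ⊔ BSub p G (γ (n + 1)) := by
  rw [gammaLayer, gammaGen, Set.image_union, Subgroup.closure_union, closure_image_inlW]

theorem gammaGen_subset (n m : ℕ) : gammaGen p G n m ⊆ {v | ∀ t, v t ∈ γ n} := by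
  rintro _ (⟨v, hv, rfl⟩ | hv) t
  · exact Delta_iterate_mem hv m t
  · exact Subgroup.lowerCentralSeries_antitone _ (Nat.le_succ n) (hv t)

theorem Delta_mem_gammaGen {n m : ℕ} {u : ZMod p → G} (hu : u ∈ gammaGen p G n m) :
    Delta p G u ∈ gammaGen p G n (m + 1) := by
  rcases hu with ⟨v, hv, rfl⟩ | hu
  · exact Or.inl ⟨v, hv, Function.iterate_succ_apply' _ _ _⟩
  · exact Or.inr (Delta_iterate_mem hu 1)

theorem comp_add_one_mem_gammaGen {n m : ℕ} {u : ZMod p → G} (hu : u ∈ gammaGen p G n m) :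
    (fun i => u (i + 1)) ∈ gammaGen p G n m := by
  rcases hu with ⟨v, hv, rfl⟩ | hu
  · exact Or.inl ⟨fun i => v (i + 1), fun t => hv _, Delta_iterate_comp_add_one m v⟩
  · exact Or.inr fun t => hu _

instance gammaLayer_normal [NeZero p] (n m : ℕ) : (gammaLayer p G n m).Normal := by
  refine normal_of_conj_sigma_of_conj_inlW (fun h hh => conj_mem_closure ?_ hh)
    (fun b h hh => conj_mem_closure ?_ hh)
  · rintro _ ⟨u, hu, rfl⟩
    rw [sigma_mul_inlW_mul_inv]
    exact subset_closure ⟨_, comp_add_one_mem_gammaGen hu, rfl⟩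
  · rintro _ ⟨u, hu, rfl⟩
    rw [← map_inv, ← map_mul, ← map_mul, ← MulAut.conj_apply, conj_eq_commutatorElement_mul,
      map_mul]
    refine mul_mem (subset_closure ⟨_, Or.inr fun t => ?_, rfl⟩) (subset_closure ⟨u, hu, rfl⟩)
    change ⁅b t, u t⁆ ∈ γ (n + 1)
    rw [← commutatorElement_inv]
    exact inv_mem (commutator_mem_commutator (gammaGen_subset n m hu t) (mem_top _))

theorem commutator_gammaLayer_top_le [NeZero p] (n m : ℕ) :
    ⁅gammaLayer p G n m, ⊤⁆ ≤ gammaLayer p G n (m + 1) := by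
  rw [← closure_insert_sigma_range_inlW]
  refine commutator_closure_le ?_
  rintro _ ⟨u, hu, rfl⟩ _ (rfl | ⟨b, rfl⟩)
  · rw [commutatorElement_inlW_sigma]
    exact (gammaLayer_normal n (m + 1)).conj_mem _
      (subset_closure ⟨_, Delta_mem_gammaGen hu, rfl⟩) _
  · rw [← map_commutatorElement]
    exact subset_closure ⟨_, Or.inr fun t =>
      commutator_mem_commutator (gammaGen_subset n m hu t) (mem_top (b t)), rfl⟩

theorem BSub_le_commutator_gammaLayer_top [NeZero p] {n m : ℕ} (hm : m < p) :
    BSub p G (γ (n + 1)) ≤ ⁅gammaLayer p G n m, ⊤⁆ := by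
  refine BSub_le_of_forall_mulSingle_mem fun i => ?_
  suffices γ (n + 1) ≤ (⁅gammaLayer p G n m, ⊤⁆ : Subgroup (W p G)).comap
      ((inlW p G).comp (MonoidHom.mulSingle _ i)) from fun x hx => this hx
  refine commutator_le.mpr fun x hx y _ => ?_
  set u := (Delta p G)^[m] (Pi.mulSingle (i - m) x)
  have hu : u i = x := by simpa using Delta_iterate_mulSingle_apply hm (i - m) x
  have hsingle : Pi.mulSingle i ⁅x, y⁆ = ⁅u, (Pi.mulSingle i y : ZMod p → G)⁆ := by
    funext s
    by_cases hs : s = i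
    · subst hs
      simp [commutatorElement_def, hu]
    · simp [commutatorElement_def, Pi.mulSingle_eq_of_ne hs]
  rw [mem_comap, MonoidHom.comp_apply, MonoidHom.mulSingle_apply, hsingle, map_commutatorElement]
  exact commutator_mem_commutator
    (subset_closure ⟨_, Or.inl ⟨_, mulSingle_apply_mem hx (i - (m : ZMod p)), rfl⟩, rfl⟩)
    (mem_top _)

theorem commutator_gammaLayer_top [NeZero p] {n m : ℕ} (hm : m < p) :
    ⁅gammaLayer p G n m, ⊤⁆ = gammaLayer p G n (m + 1) := by
  refine le_antisymm (commutator_gammaLayer_top_le n m) ?_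
  rw [gammaLayer_eq n (m + 1)]
  refine sup_le ?_ (BSub_le_commutator_gammaLayer_top hm)
  rw [closure_le]
  rintro _ ⟨_, ⟨v, hv, rfl⟩, rfl⟩
  rw [Function.iterate_succ_apply', inlW_Delta]
  exact commutator_mem_commutator (inv_mem (subset_closure ⟨_, Or.inl ⟨v, hv, rfl⟩, rfl⟩))
    (mem_top _)

theorem gammaLayer_zero (n : ℕ) : gammaLayer p G n 0 = BSub p G (γ n) := by
  rw [gammaLayer, gammaGen, Function.iterate_zero, Set.image_id, Set.union_eq_left.mpr,
    closure_image_inlW]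
  exact fun v hv t => Subgroup.lowerCentralSeries_antitone _ (Nat.le_succ n) (hv t)

theorem gammaLayer_prime [Fact p.Prime] (hp : Odd p) (hab : ∀ g : G, g ^ p ∈ commutator G)
    (n : ℕ) : gammaLayer p G n p = gammaLayer p G (n + 1) 0 := by
  rw [gammaLayer_zero, gammaLayer, gammaGen, Set.union_eq_right.mpr, closure_image_inlW]
  rintro _ ⟨v, hv, rfl⟩ t
  exact Delta_iterate_prime_mem_lowerCentralSeries_succ hp hab hv t

theorem gammaLayer_ne_bot {n m : ℕ} (hm : m < p) (hn : (γ n : Subgroup G) ≠ ⊥) :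
    gammaLayer p G n m ≠ ⊥ := by
  obtain ⟨⟨x, hx⟩, hx1⟩ := ne_bot_iff_exists_ne_one.mp hn
  have hmem : inlW p G ((Delta p G)^[m] (Pi.mulSingle 0 x : ZMod p → G)) ∈ gammaLayer p G n m :=
    subset_closure ⟨_, Or.inl ⟨_, mulSingle_apply_mem hx 0, rfl⟩, rfl⟩
  intro hbot
  rw [hbot, mem_bot, ← map_one (inlW p G)] at hmem
  have := congrFun (SemidirectProduct.inl_injective hmem) (0 + m)
  rw [Delta_iterate_mulSingle_apply hm] at this
  exact hx1 (Subtype.ext this)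

theorem gammaStar_add_of_eq_gammaLayer_zero [NeZero p] {N n : ℕ}
    (h : gammaStar p G N = gammaLayer p G n 0) :
    ∀ m ≤ p, gammaStar p G (N + m) = gammaLayer p G n m
  | 0, _ => h
  | m + 1, hm => by
    rw [← add_assoc, gammaStar, gammaStar_add_of_eq_gammaLayer_zero h m (by omega),
      commutator_gammaLayer_top (by omega)]

theorem gammaStar_mul_add [Fact p.Prime] (hp : Odd p) (hab : ∀ g : G, g ^ p ∈ commutator G) :
    ∀ n, ∀ m ≤ p, gammaStar p G (n * p + m) = gammaLayer p G n m
  | 0 => gammaStar_add_of_eq_gammaLayer_zero (by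
      rw [zero_mul, gammaLayer_zero, Subgroup.lowerCentralSeries_zero, BSub_top]
      rfl)
  | n + 1 => gammaStar_add_of_eq_gammaLayer_zero (by
      rw [add_mul, one_mul, gammaStar_mul_add hp hab n p le_rfl, gammaLayer_prime hp hab])

theorem lowerCentralSeries_succ_eq_gammaStar [NeZero p] :
    ∀ k, Subgroup.lowerCentralSeries (⊤ : Subgroup (W p G)) (k + 1) = gammaStar p G (k + 1)
  | 0 => by
    change ⁅(⊤ : Subgroup (W p G)), ⊤⁆ = ⁅baseW p G, ⊤⁆
    refine le_antisymm ?_ (commutator_mono le_top le_rfl)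
    have h := commutator_closure_le (K := ⁅baseW p G, ⊤⁆)
      (S := insert (sigma p G) (Set.range (inlW p G)))
      (T := insert (sigma p G) (Set.range (inlW p G))) ?_
    · rwa [closure_insert_sigma_range_inlW] at h
    rintro _ (rfl | ⟨a, rfl⟩) _ (rfl | ⟨b, rfl⟩)
    · rw [commutatorElement_self]
      exact one_mem _
    · rw [← commutatorElement_inv]
      exact inv_mem (commutator_mem_commutator ⟨b, rfl⟩ (mem_top _))
    all_goals exact commutator_mem_commutator ⟨a, rfl⟩ (mem_top _)
  | k + 1 => by
    rw [Subgroup.lowerCentralSeries_succ, lowerCentralSeries_succ_eq_gammaStar k]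
    rfl

end Layers

end GGS

open GGS

/-- Indexing: `γ_j(G)` is `Subgroup.lowerCentralSeries ⊤ (j - 1)`. -/
theorem statement14_general (p : ℕ) [Fact p.Prime] (hp : Odd p)
    (G : Type*) [Group G]
    (c : ℕ) (hc1 : Subgroup.lowerCentralSeries (⊤ : Subgroup G) c = ⊥) (hc2 : Subgroup.lowerCentralSeries (⊤ : Subgroup G) (c - 1) ≠ ⊥)
    (hab : ∀ g : G, g ^ p ∈ commutator G) :
    (∀ j k : ℕ, 1 ≤ j → 1 ≤ k → k ≤ p →
      gammaStar p G ((j - 1) * p + k - 1)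
        = Subgroup.closure ((inlW p G) ''
            ((Delta p G)^[k - 1] '' {v : ZMod p → G | ∀ t, v t ∈ Subgroup.lowerCentralSeries (⊤ : Subgroup G) (j - 1)}))
          ⊔ BSub p G (Subgroup.lowerCentralSeries (⊤ : Subgroup G) j))
    ∧ (∀ j : ℕ, gammaStar p G (j * p) = BSub p G (Subgroup.lowerCentralSeries (⊤ : Subgroup G) j))
    ∧ Subgroup.lowerCentralSeries (⊤ : Subgroup (W p G)) (c * p) = ⊥
    ∧ Subgroup.lowerCentralSeries (⊤ : Subgroup (W p G)) (c * p - 1) ≠ ⊥ := by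
  have hp2 := (Fact.out : p.Prime).two_le
  have hγ := gammaStar_mul_add (G := G) hp hab
  have hB : ∀ j, gammaStar p G (j * p) = BSub p G (Subgroup.lowerCentralSeries ⊤ j) := fun j => by
    rw [← gammaLayer_zero, ← hγ j 0 (Nat.zero_le p), add_zero]
  obtain ⟨c, rfl⟩ : ∃ c', c = c' + 1 :=
    Nat.exists_eq_add_one.mpr (Nat.pos_of_ne_zero fun hc => hc2 (hc ▸ hc1))
  rw [Nat.add_sub_cancel] at hc2
  refine ⟨fun j k hj hk hkp => ?_, hB, ?_, ?_⟩
  · obtain ⟨j, rfl⟩ := Nat.exists_eq_add_one.mpr hj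
    obtain ⟨k, rfl⟩ := Nat.exists_eq_add_one.mpr hk
    simp only [Nat.add_sub_cancel, ← add_assoc]
    rw [hγ j k (by omega), gammaLayer_eq]
  · have hcp : (c + 1) * p = c * p + (p - 1) + 1 := by rw [add_mul]; omega
    rw [hcp, lowerCentralSeries_succ_eq_gammaStar, ← hcp, hB, hc1, BSub, Subgroup.pi_bot,
      Subgroup.map_bot]
  · have hcp : (c + 1) * p - 1 = c * p + (p - 2) + 1 := by rw [add_mul]; omega
    rw [hcp, lowerCentralSeries_succ_eq_gammaStar, add_assoc, show p - 2 + 1 = p - 1 by omega,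
      hγ c (p - 1) (by omega)]
    exact gammaLayer_ne_bot (by omega) hc2

/-- For a finite p-group G of nilpotency class c with elementary abelian abelianisation,
    writing i = (j−1)p + k with j ≥ 1 and 1 ≤ k ≤ p, one has
    γ_i*(W(G)) = Δ^{k−1}(B(γ_j(G)))·B(γ_{j+1}(G)) (the subgroup generated by the image set
    Δ^{k−1}(B(γ_j(G))) together with B(γ_{j+1}(G))); in particular
    γ_{jp+1}*(W(G)) = B(γ_{j+1}(G)) for every j ≥ 0, and the nilpotency class of W(G) is
    exactly cp.
    (γ_i*(W(G)) = `gammaStar p G (i-1)`, γ_j(G) = `lowerCentralSeries G (j-1)`; the class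
    statements are expressed via the lower central series.) -/
theorem statement14 (p : ℕ) [Fact p.Prime] (hp : Odd p)
    (G : Type*) [Group G] [Fintype G] (hG : IsPGroup p G)
    (c : ℕ) (hc1 : Subgroup.lowerCentralSeries (⊤ : Subgroup G) c = ⊥) (hc2 : Subgroup.lowerCentralSeries (⊤ : Subgroup G) (c - 1) ≠ ⊥)
    (hab : ∀ g : G, g ^ p ∈ commutator G) :
    (∀ j k : ℕ, 1 ≤ j → 1 ≤ k → k ≤ p →
      gammaStar p G ((j - 1) * p + k - 1)
        = Subgroup.closure ((inlW p G) ''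
            ((Delta p G)^[k - 1] '' {v : ZMod p → G | ∀ t, v t ∈ Subgroup.lowerCentralSeries (⊤ : Subgroup G) (j - 1)}))
          ⊔ BSub p G (Subgroup.lowerCentralSeries (⊤ : Subgroup G) j))
    ∧ (∀ j : ℕ, gammaStar p G (j * p) = BSub p G (Subgroup.lowerCentralSeries (⊤ : Subgroup G) j))
    ∧ Subgroup.lowerCentralSeries (⊤ : Subgroup (W p G)) (c * p) = ⊥
    ∧ Subgroup.lowerCentralSeries (⊤ : Subgroup (W p G)) (c * p - 1) ≠ ⊥ :=
  statement14_general p hp G c hc1 hc2 hab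
end
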